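/- In a finite MDP, if μ₀ is limit-sure eventually synchronizing in T with support in U, then either μ₀ is sure eventually synchronizing in T, or for every k ≥ 0, μ₀ is limit-sure eventually synchronizing in R = Pre^k(T) with support in Z = Pre^k(U); in particular, the quantitative transfer holds: if M^α_n(T) ≥ 1 − ε and M^α_n(U) = 1 with n ≥ k, then M^α_{n−k}(Pre^k(T)) ≥ 1 − ε/η^k and M^α_{n−k}(Pre^k(U)) = 1, where η is the minimum positive transition probability. -/

import Mathlib

open Finset

structure MDP (Q A : Type) [Fintype Q] [Fintype A] where
  δ : Q → A → Q → ℝ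
  nonneg : ∀ q a q', 0 ≤ δ q a q'
  sum_one : ∀ q a, ∑ q', δ q a q' = 1

structure Strat (Q A : Type) [Fintype A] where
  σ : List Q → A → ℝ
  nonneg : ∀ h a, 0 ≤ σ h a
  sum_one : ∀ h, ∑ a, σ h a = 1

variable {Q A : Type} [Fintype Q] [DecidableEq Q] [Fintype A]

/-- Probability of a path of length `n` (i.e. `n+1` states) from initial
distribution `μ0` under strategy `α`. The history passed to the strategy is
the list of visited states, most recent first. -/
noncomputable def pathProb (M : MDP Q A) (μ0 : Q → ℝ) (α : Strat Q A)
    {n : ℕ} (π : Fin (n + 1) → Q) : ℝ :=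
  μ0 (π 0) *
    ∏ i : Fin n,
      ∑ a,
        α.σ (List.ofFn (fun j : Fin (i.1 + 1) =>
            π ⟨i.1 - j.1, lt_of_le_of_lt (Nat.sub_le i.1 j.1) (Nat.lt_succ_of_lt i.isLt)⟩)) a *
          M.δ (π i.castSucc) a (π i.succ)

/-- Distribution over states after `n` steps. -/
noncomputable def Mdist (M : MDP Q A) (μ0 : Q → ℝ) (α : Strat Q A) (n : ℕ) (q : Q) : ℝ :=
  ∑ π : Fin (n + 1) → Q, if π (Fin.last n) = q then pathProb M μ0 α π else 0

/-- Probability mass in `T` after `n` steps. -/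
noncomputable def Mmass (M : MDP Q A) (μ0 : Q → ℝ) (α : Strat Q A) (n : ℕ) (T : Finset Q) : ℝ :=
  ∑ q ∈ T, Mdist M μ0 α n q

open scoped Classical in
/-- Support of the transition `δ(q,a)`. -/
noncomputable def post (M : MDP Q A) (q : Q) (a : A) : Finset Q :=
  Finset.univ.filter (fun q' => 0 < M.δ q a q')

open scoped Classical in
/-- One-step predecessor operator. -/
noncomputable def PreM (M : MDP Q A) (S : Finset Q) : Finset Q :=
  Finset.univ.filter (fun q => ∃ a, post M q a ⊆ S)

def IsDist (μ : Q → ℝ) : Prop := (∀ q, 0 ≤ μ q) ∧ ∑ q, μ q = 1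

def dirac (q0 : Q) : Q → ℝ := fun q => if q = q0 then (1 : ℝ) else 0

def PureStrat (α : Strat Q A) : Prop := ∀ h, ∃ a, α.σ h a = 1

/-! From a state outside `Pre(S)` every action leaves `S` with probability at least `η`, so the
mass outside `S` at step `n + 1` is at least `η` times the mass outside `Pre(S)` at step `n`;
iterating gives the quantitative transfer. For the qualitative statement, choose `ε` below
`η^m (1 - μ0(Pre^m(T)))` for all `m < k`: a run that is `ε`-close to synchronizing in `T` in
fewer than `k` steps would then force `μ0(Pre^m(T)) = 1`, and from such a `μ0` the strategy
playing actions that witness membership in `Pre` synchronizes surely in `T` after `m` steps. -/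

open Filter Topology

section

omit [Fintype Q] [DecidableEq Q]

def history {n : ℕ} (π : Fin (n + 1) → Q) : List Q :=
  List.ofFn fun j : Fin (n + 1) => π ⟨n - j, Nat.lt_succ_of_le (Nat.sub_le n j)⟩

theorem history_length {n : ℕ} (π : Fin (n + 1) → Q) : (history π).length = n + 1 :=
  List.length_ofFn

theorem history_head? {n : ℕ} (π : Fin (n + 1) → Q) :
    (history π).head? = some (π (Fin.last n)) := by
  simp [history, List.ofFn_succ, Fin.last]

theorem Strat.nonempty_action (α : Strat Q A) : Nonempty A := by
  by_contra h
  simpa [not_nonempty_iff.1 h] using α.sum_one []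

end

section

omit [DecidableEq Q]

theorem IsDist.sum_le_one {μ : Q → ℝ} (hμ : IsDist μ) (S : Finset Q) : ∑ q ∈ S, μ q ≤ 1 :=
  hμ.2 ▸ sum_le_sum_of_subset_of_nonneg (subset_univ S) fun q _ _ => hμ.1 q

variable (M : MDP Q A) (μ0 : Q → ℝ) (α : Strat Q A)

theorem mem_post {q q' : Q} {a : A} : q' ∈ post M q a ↔ 0 < M.δ q a q' := by
  simp [post]

theorem MDP.sum_δ_eq_one_of_post_subset {q : Q} {a : A} {S : Finset Q} (h : post M q a ⊆ S) :
    ∑ q' ∈ S, M.δ q a q' = 1 := by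
  rw [← M.sum_one q a]
  refine sum_subset (subset_univ S) fun q' _ hq' => ?_
  exact le_antisymm (not_lt.1 fun hpos => hq' (h ((mem_post M).2 hpos))) (M.nonneg q a q')

noncomputable def stepProb {n : ℕ} (π : Fin (n + 1) → Q) (q : Q) : ℝ :=
  ∑ a, α.σ (history π) a * M.δ (π (Fin.last n)) a q

theorem pathProb_nonneg (hμ0 : ∀ q, 0 ≤ μ0 q) {n : ℕ} (π : Fin (n + 1) → Q) :
    0 ≤ pathProb M μ0 α π :=
  mul_nonneg (hμ0 _) <| prod_nonneg fun _ _ =>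
    sum_nonneg fun _ _ => mul_nonneg (α.nonneg _ _) (M.nonneg _ _ _)

theorem stepProb_nonneg {n : ℕ} (π : Fin (n + 1) → Q) (q : Q) : 0 ≤ stepProb M α π q :=
  sum_nonneg fun _ _ => mul_nonneg (α.nonneg _ _) (M.nonneg _ _ _)

theorem sum_stepProb_eq {n : ℕ} (π : Fin (n + 1) → Q) (S : Finset Q) :
    ∑ q ∈ S, stepProb M α π q = ∑ a, α.σ (history π) a * ∑ q ∈ S, M.δ (π (Fin.last n)) a q := by
  simp only [stepProb, mul_sum]
  exact sum_comm

theorem sum_stepProb {n : ℕ} (π : Fin (n + 1) → Q) : ∑ q, stepProb M α π q = 1 := by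
  simp [sum_stepProb_eq, M.sum_one, α.sum_one]

theorem le_sum_stepProb {n : ℕ} (π : Fin (n + 1) → Q) {S : Finset Q} {c : ℝ}
    (h : ∀ a, c ≤ ∑ q ∈ S, M.δ (π (Fin.last n)) a q) : c ≤ ∑ q ∈ S, stepProb M α π q := by
  rw [sum_stepProb_eq]
  calc c = ∑ a, α.σ (history π) a * c := by rw [← sum_mul, α.sum_one, one_mul]
    _ ≤ _ := sum_le_sum fun a _ => mul_le_mul_of_nonneg_left (h a) (α.nonneg _ _)

open scoped Classical in
noncomputable def Strat.pure (d : List Q → A) : Strat Q A where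
  σ h a := if a = d h then 1 else 0
  nonneg h a := by split_ifs <;> norm_num
  sum_one h := by simp

theorem stepProb_pure (d : List Q → A) {n : ℕ} (π : Fin (n + 1) → Q) (q : Q) :
    stepProb M (Strat.pure d) π q = M.δ (π (Fin.last n)) (d (history π)) q := by
  classical
  simp [stepProb, Strat.pure, ite_mul]

theorem pathProb_snoc {n : ℕ} (π : Fin (n + 1) → Q) (q : Q) :
    pathProb M μ0 α (Fin.snoc π q : Fin (n + 2) → Q) = pathProb M μ0 α π * stepProb M α π q := by
  have snoc_mk : ∀ (m : ℕ) (hm : m < n + 1),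
      (Fin.snoc π q : Fin (n + 2) → Q) ⟨m, by omega⟩ = π ⟨m, hm⟩ := fun m hm =>
    Fin.snoc_castSucc (α := fun _ => Q) q π ⟨m, hm⟩
  have hzero : (0 : Fin (n + 2)) = Fin.castSucc 0 := rfl
  simp (disch := omega) only [pathProb, stepProb, history, Fin.prod_univ_castSucc, mul_assoc,
    hzero, Fin.snoc_castSucc, Fin.succ_last, Fin.snoc_last, Fin.succ_castSucc, Fin.val_castSucc,
    Fin.val_last, snoc_mk]

theorem sum_tuple_eq_sum_snoc {n : ℕ} (f : (Fin (n + 2) → Q) → ℝ) :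
    ∑ π : Fin (n + 2) → Q, f π = ∑ π : Fin (n + 1) → Q, ∑ q, f (Fin.snoc π q) := by
  rw [← (Fin.snocEquiv fun _ => Q).sum_comp, Fintype.sum_prod_type_right]
  rfl

end

theorem IsDist.sum_compl {μ : Q → ℝ} (hμ : IsDist μ) (S : Finset Q) :
    ∑ q ∈ Sᶜ, μ q = 1 - ∑ q ∈ S, μ q := by
  rw [← hμ.2, ← sum_add_sum_compl S μ, add_sub_cancel_left]

theorem mem_PreM {M : MDP Q A} {S : Finset Q} {q : Q} :
    q ∈ PreM M S ↔ ∃ a, post M q a ⊆ S := by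
  simp [PreM]

theorem MDP.le_sum_δ_compl_of_notMem_PreM (M : MDP Q A) {η : ℝ}
    (hδ : ∀ q a q', 0 < M.δ q a q' → η ≤ M.δ q a q') {S : Finset Q} {q : Q}
    (hq : q ∉ PreM M S) (a : A) : η ≤ ∑ q' ∈ Sᶜ, M.δ q a q' := by
  obtain ⟨q', hq'post, hq'S⟩ := not_subset.1 fun h => hq (mem_PreM.2 ⟨a, h⟩)
  exact (hδ q a q' ((mem_post M).1 hq'post)).trans <|
    single_le_sum (fun q' _ => M.nonneg q a q') (mem_compl.2 hq'S)

section

variable (M : MDP Q A) (μ0 : Q → ℝ) (α : Strat Q A)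

theorem Mmass_zero (S : Finset Q) : Mmass M μ0 α 0 S = ∑ q ∈ S, μ0 q := by
  refine sum_congr rfl fun q _ => ?_
  rw [Mdist, ← (Equiv.funUnique (Fin 1) Q).symm.sum_comp]
  simp [pathProb, Equiv.funUnique]

theorem Mmass_eq_sum_pathProb (n : ℕ) (S : Finset Q) :
    Mmass M μ0 α n S =
      ∑ π : Fin (n + 1) → Q, if π (Fin.last n) ∈ S then pathProb M μ0 α π else 0 := by
  simp only [Mmass, Mdist]
  rw [sum_comm]
  simp only [sum_ite_eq]

theorem Mmass_succ (n : ℕ) (S : Finset Q) :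
    Mmass M μ0 α (n + 1) S =
      ∑ π : Fin (n + 1) → Q, pathProb M μ0 α π * ∑ q ∈ S, stepProb M α π q := by
  simp only [Mmass, Mdist, sum_tuple_eq_sum_snoc, Fin.snoc_last, pathProb_snoc, mul_sum,
    sum_ite_eq', mem_univ, if_true]
  exact sum_comm

theorem isDist_Mdist (hμ0 : IsDist μ0) (n : ℕ) : IsDist (Mdist M μ0 α n) := by
  refine ⟨fun q => sum_nonneg fun π _ => ?_, ?_⟩
  · split_ifs
    exacts [pathProb_nonneg M μ0 α hμ0.1 π, le_rfl]
  · show Mmass M μ0 α n univ = 1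
    induction n with
    | zero => rw [Mmass_zero]; exact hμ0.2
    | succ n ih => simpa [Mmass_succ, sum_stepProb, Mmass_eq_sum_pathProb] using ih

theorem Mmass_le_one (hμ0 : IsDist μ0) (n : ℕ) (S : Finset Q) : Mmass M μ0 α n S ≤ 1 :=
  (isDist_Mdist M μ0 α hμ0 n).sum_le_one S

theorem Mmass_compl (hμ0 : IsDist μ0) (n : ℕ) (S : Finset Q) :
    Mmass M μ0 α n Sᶜ = 1 - Mmass M μ0 α n S :=
  (isDist_Mdist M μ0 α hμ0 n).sum_compl S

theorem mul_Mmass_le_Mmass_succ (hμ0 : ∀ q, 0 ≤ μ0 q) {n : ℕ} {S S' : Finset Q} {c : ℝ}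
    (h : ∀ π : Fin (n + 1) → Q, π (Fin.last n) ∈ S → c ≤ ∑ q ∈ S', stepProb M α π q) :
    c * Mmass M μ0 α n S ≤ Mmass M μ0 α (n + 1) S' := by
  rw [Mmass_eq_sum_pathProb, Mmass_succ, mul_sum]
  refine sum_le_sum fun π _ => ?_
  have hπ := pathProb_nonneg M μ0 α hμ0 π
  split_ifs with hS
  · rw [mul_comm]
    exact mul_le_mul_of_nonneg_left (h π hS) hπ
  · rw [mul_zero]
    exact mul_nonneg hπ (sum_nonneg fun q _ => stepProb_nonneg M α π q)

end

section

variable {M : MDP Q A} {μ0 : Q → ℝ} {η : ℝ} (α : Strat Q A)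

theorem mul_one_sub_Mmass_PreM_le (hμ0 : IsDist μ0)
    (hδ : ∀ q a q', 0 < M.δ q a q' → η ≤ M.δ q a q') (n : ℕ) (S : Finset Q) :
    η * (1 - Mmass M μ0 α n (PreM M S)) ≤ 1 - Mmass M μ0 α (n + 1) S := by
  rw [← Mmass_compl M μ0 α hμ0, ← Mmass_compl M μ0 α hμ0]
  exact mul_Mmass_le_Mmass_succ M μ0 α hμ0.1 fun π hπ =>
    le_sum_stepProb M α π (M.le_sum_δ_compl_of_notMem_PreM hδ (mem_compl.1 hπ))

theorem pow_mul_one_sub_Mmass_iterate_PreM_le (hμ0 : IsDist μ0) (hη : 0 ≤ η)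
    (hδ : ∀ q a q', 0 < M.δ q a q' → η ≤ M.δ q a q') (n k : ℕ) (S : Finset Q) :
    η ^ k * (1 - Mmass M μ0 α n ((PreM M)^[k] S)) ≤ 1 - Mmass M μ0 α (n + k) S := by
  induction k generalizing n with
  | zero => simp
  | succ k ih =>
    rw [Function.iterate_succ_apply', pow_succ, mul_assoc, ← add_assoc, add_right_comm]
    calc η ^ k * (η * (1 - Mmass M μ0 α n (PreM M ((PreM M)^[k] S))))
        ≤ η ^ k * (1 - Mmass M μ0 α (n + 1) ((PreM M)^[k] S)) := by
          gcongr
          exact mul_one_sub_Mmass_PreM_le α hμ0 hδ n _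
      _ ≤ 1 - Mmass M μ0 α (n + 1 + k) S := ih (n + 1)

theorem one_sub_div_pow_le_Mmass_iterate_PreM (hμ0 : IsDist μ0) (hη : 0 < η)
    (hδ : ∀ q a q', 0 < M.δ q a q' → η ≤ M.δ q a q') {n k : ℕ} {T : Finset Q} {ε : ℝ}
    (hT : 1 - ε ≤ Mmass M μ0 α (n + k) T) :
    1 - ε / η ^ k ≤ Mmass M μ0 α n ((PreM M)^[k] T) := by
  have h := pow_mul_one_sub_Mmass_iterate_PreM_le α hμ0 hη.le hδ n k T
  have hηk : 0 < η ^ k := pow_pos hη k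
  rw [sub_le_comm, le_div_iff₀' hηk]
  linarith

theorem Mmass_iterate_PreM_eq_one (hμ0 : IsDist μ0) (hη : 0 < η)
    (hδ : ∀ q a q', 0 < M.δ q a q' → η ≤ M.δ q a q') {n k : ℕ} {U : Finset Q}
    (hU : Mmass M μ0 α (n + k) U = 1) : Mmass M μ0 α n ((PreM M)^[k] U) = 1 :=
  (Mmass_le_one M μ0 α hμ0 n _).antisymm <| by
    simpa using one_sub_div_pow_le_Mmass_iterate_PreM α hμ0 hη hδ (ε := 0) (by rw [hU]; simp)

end

theorem exists_Mmass_eq_one_of_sum_iterate_PreM [Nonempty A] (M : MDP Q A) {μ0 : Q → ℝ}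
    (hμ0 : IsDist μ0) {m : ℕ} {T : Finset Q} (h : ∑ q ∈ (PreM M)^[m] T, μ0 q = 1) :
    ∃ β : Strat Q A, Mmass M μ0 β m T = 1 := by
  let d : List Q → A := fun h => Classical.epsilon fun a =>
    ∀ q ∈ h.head?, post M q a ⊆ (PreM M)^[m - h.length] T
  refine ⟨Strat.pure d, ?_⟩
  have hd : ∀ {j : ℕ} (π : Fin (j + 1) → Q),
      π (Fin.last j) ∈ PreM M ((PreM M)^[m - (j + 1)] T) →
        post M (π (Fin.last j)) (d (history π)) ⊆ (PreM M)^[m - (j + 1)] T := by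
    intro j π hπ
    have hspec : ∀ q ∈ (history π).head?,
        post M q (d (history π)) ⊆ (PreM M)^[m - (history π).length] T :=
      Classical.epsilon_spec (p := fun a =>
        ∀ q ∈ (history π).head?, post M q a ⊆ (PreM M)^[m - (history π).length] T)
        (by simpa [history_head?, history_length] using mem_PreM.1 hπ)
    simpa [history_head?, history_length] using hspec
  have invariant : ∀ j ≤ m, Mmass M μ0 (Strat.pure d) j ((PreM M)^[m - j] T) = 1 := by
    intro j
    induction j with
    | zero => simpa [Mmass_zero] using h
    | succ j ih =>
      intro hjm
      have hpre : (PreM M)^[m - j] T = PreM M ((PreM M)^[m - (j + 1)] T) := by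
        rw [← Function.iterate_succ_apply' (PreM M), Nat.succ_eq_add_one,
          show m - (j + 1) + 1 = m - j by omega]
      refine (Mmass_le_one M μ0 _ hμ0 _ _).antisymm ?_
      have := mul_Mmass_le_Mmass_succ M μ0 (Strat.pure d) hμ0.1 (c := 1)
        (S := (PreM M)^[m - j] T) (S' := (PreM M)^[m - (j + 1)] T) fun π hπ => by
          rw [hpre] at hπ
          simp only [stepProb_pure]
          exact (M.sum_δ_eq_one_of_post_subset (hd π hπ)).ge
      rwa [ih (by omega), one_mul] at this
  simpa using invariant m le_rfl

def SureSync (M : MDP Q A) (μ0 : Q → ℝ) (T : Finset Q) : Prop :=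
  ∃ (α : Strat Q A) (n : ℕ), Mmass M μ0 α n T = 1

def LimitSureSync (M : MDP Q A) (μ0 : Q → ℝ) (T U : Finset Q) : Prop :=
  ∀ ε : ℝ, 0 < ε → ∃ (α : Strat Q A) (n : ℕ), 1 - ε ≤ Mmass M μ0 α n T ∧ Mmass M μ0 α n U = 1

theorem sum_iterate_PreM_lt_one_of_not_sureSync [Nonempty A] {M : MDP Q A} {μ0 : Q → ℝ}
    (hμ0 : IsDist μ0) {T : Finset Q} (h : ¬ SureSync M μ0 T) (m : ℕ) :
    ∑ q ∈ (PreM M)^[m] T, μ0 q < 1 :=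
  (hμ0.sum_le_one _).lt_of_ne fun hm =>
    h ⟨_, m, (exists_Mmass_eq_one_of_sum_iterate_PreM M hμ0 hm).choose_spec⟩

theorem LimitSureSync.iterate_PreM {M : MDP Q A} {μ0 : Q → ℝ} {η : ℝ} {T U : Finset Q}
    (hμ0 : IsDist μ0) (hη : 0 < η) (hδ : ∀ q a q', 0 < M.δ q a q' → η ≤ M.δ q a q')
    (h : LimitSureSync M μ0 T U) {k : ℕ} (hk : ∀ m < k, ∑ q ∈ (PreM M)^[m] T, μ0 q < 1) :
    LimitSureSync M μ0 ((PreM M)^[k] T) ((PreM M)^[k] U) := by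
  intro ε hε
  have hsmall : ∀ᶠ ε' in 𝓝[>] 0, (ε' ≤ ε * η ^ k ∧
      ∀ m ∈ range k, ε' < (1 - ∑ q ∈ (PreM M)^[m] T, μ0 q) * η ^ m) ∧ 0 < ε' :=
    (Eventually.filter_mono nhdsWithin_le_nhds <| (eventually_le_nhds (by positivity)).and <|
      (eventually_all_finset _).2 fun m hm =>
        eventually_lt_nhds (mul_pos (sub_pos.2 (hk m (mem_range.1 hm))) (pow_pos hη m))).and
      self_mem_nhdsWithin
  obtain ⟨ε', ⟨hε'ε, hε'k⟩, hε'⟩ := hsmall.exists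
  obtain ⟨α, n, hT, hU⟩ := h ε' hε'
  obtain hkn | hnk := le_or_gt k n
  · obtain ⟨n, rfl⟩ := Nat.exists_eq_add_of_le' hkn
    refine ⟨α, n, ?_, Mmass_iterate_PreM_eq_one α hμ0 hη hδ hU⟩
    have := one_sub_div_pow_le_Mmass_iterate_PreM α hμ0 hη hδ hT
    have : ε' / η ^ k ≤ ε := div_le_of_le_mul₀ (by positivity) hε.le hε'ε
    linarith
  · have h0 := one_sub_div_pow_le_Mmass_iterate_PreM α hμ0 hη hδ (n := 0) (k := n)
      (by rwa [zero_add])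
    rw [Mmass_zero] at h0
    have := (div_lt_iff₀ (pow_pos hη n)).2 (hε'k n (mem_range.2 hnk))
    linarith

theorem limit_sure_pre_transfer_general {Q A : Type} [Fintype Q] [DecidableEq Q]
    [Fintype A]
    (M : MDP Q A) (T U : Finset Q)
    (μ0 : Q → ℝ) (hμ0 : IsDist μ0)
    (η : ℝ) (hη : 0 < η)
    (hδ : ∀ q a q', 0 < M.δ q a q' → η ≤ M.δ q a q') :
    ((∀ ε : ℝ, 0 < ε → ∃ (α : Strat Q A) (n : ℕ),
        1 - ε ≤ Mmass M μ0 α n T ∧ Mmass M μ0 α n U = 1) →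
      ((∃ (α : Strat Q A) (n : ℕ), Mmass M μ0 α n T = 1) ∨
        ∀ k : ℕ, ∀ ε : ℝ, 0 < ε → ∃ (α : Strat Q A) (n : ℕ),
          1 - ε ≤ Mmass M μ0 α n ((PreM M)^[k] T) ∧
            Mmass M μ0 α n ((PreM M)^[k] U) = 1)) ∧
    (∀ (α : Strat Q A) (n k : ℕ), k ≤ n → ∀ ε : ℝ,
      1 - ε ≤ Mmass M μ0 α n T → Mmass M μ0 α n U = 1 →
        1 - ε / η ^ k ≤ Mmass M μ0 α (n - k) ((PreM M)^[k] T) ∧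
          Mmass M μ0 α (n - k) ((PreM M)^[k] U) = 1) := by
  refine ⟨fun hlim => ?_, fun α n k hkn ε hT hU => ?_⟩
  · obtain ⟨α, -⟩ := hlim 1 one_pos
    have := α.nonempty_action
    by_cases hsure : SureSync M μ0 T
    · exact Or.inl hsure
    · exact Or.inr fun k => LimitSureSync.iterate_PreM hμ0 hη hδ hlim fun m _ =>
        sum_iterate_PreM_lt_one_of_not_sureSync hμ0 hsure m
  · obtain ⟨n, rfl⟩ := Nat.exists_eq_add_of_le' hkn
    rw [Nat.add_sub_cancel]
    exact ⟨one_sub_div_pow_le_Mmass_iterate_PreM α hμ0 hη hδ hT,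
      Mmass_iterate_PreM_eq_one α hμ0 hη hδ hU⟩

/-- If `μ0` is limit-sure eventually synchronizing in `T` with support in `U`, then
either `μ0` is sure eventually synchronizing in `T`, or for every `k`, `μ0` is
limit-sure eventually synchronizing in `Pre^k(T)` with support in `Pre^k(U)`.
Moreover the quantitative transfer holds: if `M^α_n(T) ≥ 1 − ε` and `M^α_n(U) = 1`
with `n ≥ k`, then `M^α_{n−k}(Pre^k(T)) ≥ 1 − ε/η^k` and `M^α_{n−k}(Pre^k(U)) = 1`,
where `η` is the minimum positive transition probability. -/
theorem limit_sure_pre_transfer {Q A : Type} [Fintype Q] [DecidableEq Q]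
    [Fintype A] [Nonempty Q] [Nonempty A]
    (M : MDP Q A) (T U : Finset Q) (hTU : T ⊆ U)
    (μ0 : Q → ℝ) (hμ0 : IsDist μ0)
    (η : ℝ) (hη : 0 < η)
    (hδ : ∀ q a q', 0 < M.δ q a q' → η ≤ M.δ q a q') :
    ((∀ ε : ℝ, 0 < ε → ∃ (α : Strat Q A) (n : ℕ),
        1 - ε ≤ Mmass M μ0 α n T ∧ Mmass M μ0 α n U = 1) →
      ((∃ (α : Strat Q A) (n : ℕ), Mmass M μ0 α n T = 1) ∨
        ∀ k : ℕ, ∀ ε : ℝ, 0 < ε → ∃ (α : Strat Q A) (n : ℕ),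
          1 - ε ≤ Mmass M μ0 α n ((PreM M)^[k] T) ∧
            Mmass M μ0 α n ((PreM M)^[k] U) = 1)) ∧
    (∀ (α : Strat Q A) (n k : ℕ), k ≤ n → ∀ ε : ℝ,
      1 - ε ≤ Mmass M μ0 α n T → Mmass M μ0 α n U = 1 →
        1 - ε / η ^ k ≤ Mmass M μ0 α (n - k) ((PreM M)^[k] T) ∧
          Mmass M μ0 α (n - k) ((PreM M)^[k] U) = 1) :=
  limit_sure_pre_transfer_general M T U μ0 hμ0 η hη hδ
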